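/- Let A and A' be two n-dimensional algebras over a finite field K. If A and A' are isomorphic, then the vertex-colored graphs G₂(A) and G₂(A') are isomorphic. Reciprocally, if G₂(A) and G₂(A') are isomorphic, then there exists a multiplicative bijective map between A and A', that is, a bijection f : A → A' (not necessarily linear) such that f(u)f(v) = f(uv) for all u, v ∈ A. -/

import Mathlib

/-- Vertices of the graphs `G₁(A)` and `G₂(A)`: row vertices `r u`, column
vertices `c u`, symbol vertices `s u` and cell vertices `t u v`. -/
inductive Vert (A : Type*) : Type _
  | r : A → Vert A
  | c : A → Vert A
  | s : A → Vert A
  | t : A → A → Vert A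

section Graphs

variable {A : Type*} [Zero A]

/-- The left annihilator `Ann_{A⁻}(A)` of the algebra with product `mul`. -/
def annL (mul : A → A → A) : Set A := {u | ∀ v, mul u v = 0}

/-- The right annihilator `Ann_{A⁺}(A)` of the algebra with product `mul`. -/
def annR (mul : A → A → A) : Set A := {u | ∀ v, mul v u = 0}

/-- The derived set `A² = {uv : u, v ∈ A}` of the algebra with product `mul`. -/
def derived (mul : A → A → A) : Set A := {w | ∃ u v, mul u v = w}

/-- The vertex set of `G₁(A)` and `G₂(A)`:
`R_A = {r_u : u ∈ A ∖ Ann_{A⁻}(A)}`, `C_A = {c_u : u ∈ A ∖ Ann_{A⁺}(A)}`,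
`S_A = {s_u : u ∈ A² ∖ {0}}`, `T_A = {t_{u,v} : u, v ∈ A, uv ≠ 0}`. -/
def IsVert (mul : A → A → A) : Vert A → Prop
  | .r u => u ∉ annL mul
  | .c u => u ∉ annR mul
  | .s u => u ∈ derived mul ∧ u ≠ 0
  | .t u v => mul u v ≠ 0

/-- The adjacency relation of `G₁(A)`: edges `r_u t_{u,v}`, `c_v t_{u,v}` and
`s_{uv} t_{u,v}` for every `u, v ∈ A` with `uv ≠ 0`. -/
inductive G1Adj (mul : A → A → A) : Vert A → Vert A → Prop
  | rt (u v : A) : mul u v ≠ 0 → G1Adj mul (.r u) (.t u v)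
  | tr (u v : A) : mul u v ≠ 0 → G1Adj mul (.t u v) (.r u)
  | ct (u v : A) : mul u v ≠ 0 → G1Adj mul (.c v) (.t u v)
  | tc (u v : A) : mul u v ≠ 0 → G1Adj mul (.t u v) (.c v)
  | st (u v : A) : mul u v ≠ 0 → G1Adj mul (.s (mul u v)) (.t u v)
  | ts (u v : A) : mul u v ≠ 0 → G1Adj mul (.t u v) (.s (mul u v))

lemma G1Adj.ne {mul : A → A → A} {x y : Vert A} (h : G1Adj mul x y) : x ≠ y := by
  cases h <;> simp

/-- The graph `G₁(A)`, on the vertex set `R_A ∪ C_A ∪ S_A ∪ T_A`. -/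
def G1 (mul : A → A → A) : SimpleGraph {x : Vert A // IsVert mul x} where
  Adj x y := G1Adj mul x.1 y.1
  symm := ⟨by rintro ⟨x, hx⟩ ⟨y, hy⟩ h; cases h <;> constructor <;> assumption⟩
  loopless := ⟨fun x h => G1Adj.ne h rfl⟩

/-- The adjacency relation of `G₂(A)`: that of `G₁(A)` together with the extra
edges `r_u c_u` for `u ∈ A ∖ Ann_A(A)`, `c_u s_u` for `u ∈ A² ∖ Ann_{A⁺}(A)`
and `r_u s_u` for `u ∈ A² ∖ Ann_{A⁻}(A)`. -/
inductive G2Adj (mul : A → A → A) : Vert A → Vert A → Prop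
  | g1 {x y : Vert A} : G1Adj mul x y → G2Adj mul x y
  | rc (u : A) : u ∉ annL mul ∩ annR mul → G2Adj mul (.r u) (.c u)
  | cr (u : A) : u ∉ annL mul ∩ annR mul → G2Adj mul (.c u) (.r u)
  | cs (u : A) : u ∈ derived mul \ annR mul → G2Adj mul (.c u) (.s u)
  | sc (u : A) : u ∈ derived mul \ annR mul → G2Adj mul (.s u) (.c u)
  | rs (u : A) : u ∈ derived mul \ annL mul → G2Adj mul (.r u) (.s u)
  | sr (u : A) : u ∈ derived mul \ annL mul → G2Adj mul (.s u) (.r u)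

lemma G2Adj.ne {mul : A → A → A} {x y : Vert A} (h : G2Adj mul x y) : x ≠ y := by
  cases h with
  | g1 h => exact h.ne
  | _ => simp

/-- The graph `G₂(A)`, on the vertex set `R_A ∪ C_A ∪ S_A ∪ T_A`. -/
def G2 (mul : A → A → A) : SimpleGraph {x : Vert A // IsVert mul x} where
  Adj x y := G2Adj mul x.1 y.1
  symm := ⟨by
    rintro ⟨x, hx⟩ ⟨y, hy⟩ h
    cases h with
    | g1 h => exact .g1 (by cases h <;> constructor <;> assumption)
    | rc u h => exact .cr u h
    | cr u h => exact .rc u h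
    | cs u h => exact .sc u h
    | sc u h => exact .cs u h
    | rs u h => exact .sr u h
    | sr u h => exact .rs u h⟩
  loopless := ⟨fun x h => G2Adj.ne h rfl⟩

/-- The color of a vertex: row, column, symbol or cell. -/
def Vert.color : Vert A → Fin 4
  | .r _ => 0
  | .c _ => 1
  | .s _ => 2
  | .t _ _ => 3

end Graphs

/-!
A color-preserving isomorphism `φ : G₂(A) ≃ G₂(A')` is induced by a bijection of the underlying
sets. In `G₂`, two distinct row, column or symbol vertices are adjacent exactly when they carry
the same element, so `φ` induces a bijection between the elements of `A` carrying such a vertex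
and those of `A'`. A cell vertex `t_{u,v}` is the unique cell vertex adjacent to both `r_u` and
`c_v`, so `φ` maps it to `t_{f u, f v}`, and its edge to `s_{uv}` gives `f u * f v = f (u v)`.
The remaining elements of `A` are `0` and annihilating elements outside `A²`; any bijection of
them fixing `0` completes `f`, and such a bijection exists because `A` and `A'` have the same
number of elements.
-/

theorem exists_equiv_extend_of_card_eq {α β : Type*} [Finite α] (hcard : Nat.card α = Nat.card β)
    {s : Set α} {t : Set β} (e : s ≃ t) {a₀ : α} {b₀ : β} (ha₀ : a₀ ∉ s) (hb₀ : b₀ ∉ t) :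
    ∃ F : α ≃ β, F a₀ = b₀ ∧ ∀ a : s, F a = e a := by
  classical
  have : Nonempty α := ⟨a₀⟩
  have : Finite β := Nat.finite_of_card_ne_zero (hcard ▸ Nat.card_pos.ne')
  have hst : s.ncard = t.ncard := by
    rw [← Nat.card_coe_set_eq, ← Nat.card_coe_set_eq, Nat.card_congr e]
  obtain ⟨e'⟩ : Nonempty (↥sᶜ ≃ ↥tᶜ) := by
    rw [← Finite.card_eq, Nat.card_coe_set_eq, Nat.card_coe_set_eq, Set.ncard_compl,
      Set.ncard_compl, hcard, hst]
  let e'' := e'.trans (Equiv.swap (e' ⟨a₀, ha₀⟩) ⟨b₀, hb₀⟩)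
  refine ⟨(Equiv.Set.sumCompl s).symm.trans ((e.sumCongr e'').trans (Equiv.Set.sumCompl t)),
    ?_, fun a => ?_⟩
  · simp [Equiv.Set.sumCompl_symm_apply_of_notMem ha₀, e'']
  · simp [Equiv.Set.sumCompl_symm_apply_of_mem a.2]

namespace Vert

variable {A B : Type*}

/-- The element carried by a row, column or symbol vertex (for a cell vertex `t u v`, its row). -/
def elem : Vert A → A
  | r u | c u | s u | t u _ => u

def map (g : A → B) : Vert A → Vert B
  | r u => r (g u)
  | c u => c (g u)
  | s u => s (g u)
  | t u v => t (g u) (g v)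

@[simp] lemma color_map [Zero A] [Zero B] (g : A → B) (x : Vert A) : (x.map g).color = x.color := by
  cases x <;> rfl

@[simp] lemma elem_map (g : A → B) (x : Vert A) : (x.map g).elem = g x.elem := by
  cases x <;> rfl

lemma map_symm_map (g : A ≃ B) (x : Vert A) : (x.map g).map g.symm = x := by
  cases x <;> simp [map]

def mapEquiv (g : A ≃ B) : Vert A ≃ Vert B where
  toFun := map g
  invFun := map g.symm
  left_inv := map_symm_map g
  right_inv x := by simpa using map_symm_map g.symm x

lemma map_injective {g : A → B} (hg : Function.Injective g) : Function.Injective (map g) := by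
  intro x y h
  cases x <;> cases y <;> simp_all [map, hg.eq_iff]

lemma color_eq_three_iff [Zero A] {x : Vert A} : x.color = 3 ↔ ∃ u v, x = t u v := by
  cases x <;> simp [color]

lemma eq_of_color_eq_of_elem_eq [Zero A] {x y : Vert A} (hc : x.color = y.color) (h3 : x.color ≠ 3)
    (he : x.elem = y.elem) : x = y := by
  cases x <;> cases y <;> simp_all [color, elem]

end Vert

section Adjacency

variable {A : Type*} [Zero A] {mul : A → A → A}

lemma G2Adj.eq_of_r_t {a p q : A} (h : G2Adj mul (.r a) (.t p q)) : a = p := by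
  cases h with | g1 h => cases h; rfl

lemma G2Adj.eq_of_c_t {a p q : A} (h : G2Adj mul (.c a) (.t p q)) : a = q := by
  cases h with | g1 h => cases h; rfl

lemma G2Adj.eq_of_s_t {a p q : A} (h : G2Adj mul (.s a) (.t p q)) : a = mul p q := by
  cases h with | g1 h => cases h; rfl

lemma G2Adj.elem_eq {x y : Vert A} (h : G2Adj mul x y) (hx : x.color ≠ 3) (hy : y.color ≠ 3) :
    x.elem = y.elem := by
  cases h with
  | g1 h => cases h <;> simp_all [Vert.color]
  | _ => rfl

lemma G2Adj.of_elem_eq {x y : Vert A} (hx : IsVert mul x) (hy : IsVert mul y) (hxy : x ≠ y)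
    (hx3 : x.color ≠ 3) (hy3 : y.color ≠ 3) (h : x.elem = y.elem) : G2Adj mul x y := by
  cases x <;> cases y <;> simp only [Vert.elem, Vert.color, IsVert] at * <;> subst h <;>
    first
    | exact absurd rfl hxy
    | exact absurd rfl hx3
    | exact absurd rfl hy3
    | exact .rc _ fun h => hx h.1
    | exact .cr _ fun h => hx h.2
    | exact .rs _ ⟨hy.1, hx⟩
    | exact .sr _ ⟨hx.1, hy⟩
    | exact .cs _ ⟨hy.1, hx⟩
    | exact .sc _ ⟨hx.1, hy⟩

lemma G2.elem_eq_iff {x y : {x : Vert A // IsVert mul x}} (hx : x.1.color ≠ 3)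
    (hy : y.1.color ≠ 3) : x.1.elem = y.1.elem ↔ x = y ∨ (G2 mul).Adj x y := by
  refine ⟨fun h => or_iff_not_imp_left.2 fun hxy => ?_, ?_⟩
  · exact G2Adj.of_elem_eq x.2 y.2 (fun h => hxy (Subtype.ext h)) hx hy h
  · rintro (rfl | h)
    · rfl
    · exact G2Adj.elem_eq h hx hy

end Adjacency

section Transport

variable {A B : Type*} {mul : A → A → A} {mul' : B → B → B} {g : A ≃ B}
  (hg : ∀ u v, mul' (g u) (g v) = g (mul u v))
include hg

lemma mul_symm_apply (u v : B) : mul (g.symm u) (g.symm v) = g.symm (mul' u v) := by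
  rw [g.eq_symm_apply, ← hg, g.apply_symm_apply, g.apply_symm_apply]

lemma apply_mem_derived_iff (u : A) : g u ∈ derived mul' ↔ u ∈ derived mul := by
  simp only [derived, Set.mem_ofPred_eq, ← g.exists_congr_right, hg, g.apply_eq_iff_eq]

variable [Zero A] [Zero B] (hg0 : g 0 = 0)
include hg0

lemma apply_mem_annL_iff (u : A) : g u ∈ annL mul' ↔ u ∈ annL mul := by
  simp only [annL, Set.mem_ofPred_eq, ← g.forall_congr_right, hg, ← hg0, g.apply_eq_iff_eq]

lemma apply_mem_annR_iff (u : A) : g u ∈ annR mul' ↔ u ∈ annR mul := by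
  simp only [annR, Set.mem_ofPred_eq, ← g.forall_congr_right, hg, ← hg0, g.apply_eq_iff_eq]

lemma isVert_map_iff (x : Vert A) : IsVert mul' (x.map g) ↔ IsVert mul x := by
  cases x <;> simp only [IsVert, Vert.map, apply_mem_annL_iff hg hg0, apply_mem_annR_iff hg hg0,
    apply_mem_derived_iff hg, hg, ← hg0, g.apply_eq_iff_eq, ne_eq]

lemma G2Adj.map {x y : Vert A} (h : G2Adj mul x y) : G2Adj mul' (x.map g) (y.map g) := by
  have hne {u v : A} (h : mul u v ≠ 0) : mul' (g u) (g v) ≠ 0 := by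
    rwa [hg, ← hg0, g.injective.ne_iff]
  have hann {u : A} (h : u ∉ annL mul ∩ annR mul) : g u ∉ annL mul' ∩ annR mul' := by
    rwa [Set.mem_inter_iff, apply_mem_annL_iff hg hg0, apply_mem_annR_iff hg hg0]
  have hdL {u : A} (h : u ∈ derived mul \ annL mul) : g u ∈ derived mul' \ annL mul' := by
    rwa [Set.mem_sdiff, apply_mem_derived_iff hg, apply_mem_annL_iff hg hg0]
  have hdR {u : A} (h : u ∈ derived mul \ annR mul) : g u ∈ derived mul' \ annR mul' := by
    rwa [Set.mem_sdiff, apply_mem_derived_iff hg, apply_mem_annR_iff hg hg0]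
  cases h with
  | g1 h =>
    refine .g1 ?_
    cases h with
    | rt u v h => exact .rt _ _ (hne h)
    | tr u v h => exact .tr _ _ (hne h)
    | ct u v h => exact .ct _ _ (hne h)
    | tc u v h => exact .tc _ _ (hne h)
    | st u v h => simpa only [Vert.map, hg] using G1Adj.st _ _ (hne h)
    | ts u v h => simpa only [Vert.map, hg] using G1Adj.ts _ _ (hne h)
  | rc u h => exact .rc _ (hann h)
  | cr u h => exact .cr _ (hann h)
  | cs u h => exact .cs _ (hdR h)
  | sc u h => exact .sc _ (hdR h)
  | rs u h => exact .rs _ (hdL h)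
  | sr u h => exact .sr _ (hdL h)

lemma G2Adj.map_iff {x y : Vert A} : G2Adj mul' (x.map g) (y.map g) ↔ G2Adj mul x y := by
  refine ⟨fun h => ?_, G2Adj.map hg hg0⟩
  have hg0' : g.symm 0 = 0 := by rw [g.symm_apply_eq, hg0]
  simpa only [Vert.map_symm_map] using h.map (mul_symm_apply hg) hg0'

def G2.isoOfEquiv : G2 mul ≃g G2 mul' where
  toEquiv := (Vert.mapEquiv g).subtypeEquiv fun x => (isVert_map_iff hg hg0 x).symm
  map_rel_iff' := G2Adj.map_iff hg hg0

lemma G2.isoOfEquiv_color (x : {x : Vert A // IsVert mul x}) :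
    (G2.isoOfEquiv hg hg0 x).1.color = x.1.color :=
  Vert.color_map g x.1

end Transport

section Reconstruction

variable {A B : Type*} [Zero A] [Zero B] {mul : A → A → A} {mul' : B → B → B}
  {φ : G2 mul ≃g G2 mul'}

abbrev ElemVert (mul : A → A → A) : Type _ := {x : {x : Vert A // IsVert mul x} // x.1.color ≠ 3}

def ElemVert.elem (x : ElemVert mul) : A := x.1.1.elem

lemma ElemVert.zero_notMem_range_elem (h0 : (0 : A) ∈ annL mul ∩ annR mul) :
    (0 : A) ∉ Set.range (ElemVert.elem (mul := mul)) := by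
  rintro ⟨⟨⟨x | x | x | x, hx⟩, h3⟩, rfl⟩
  exacts [hx h0.1, hx h0.2, hx.2 rfl, h3 rfl]

lemma exists_equiv_elem_eq [Finite A] (hcard : Nat.card A = Nat.card B)
    (h0 : (0 : A) ∈ annL mul ∩ annR mul) (h0' : (0 : B) ∈ annL mul' ∩ annR mul')
    (hφ : ∀ x, (φ x).1.color = x.1.color) :
    ∃ F : A ≃ B, F 0 = 0 ∧ ∀ x, x.1.color ≠ 3 → (φ x).1.elem = F x.1.elem := by
  let ψ : ElemVert mul ≃ ElemVert mul' :=
    φ.toEquiv.subtypeEquiv fun x => by rw [RelIso.coe_fn_toEquiv, hφ]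
  have hψ (x y) : Setoid.ker ElemVert.elem x y ↔ Setoid.ker ElemVert.elem (ψ x) (ψ y) := by
    simp only [Setoid.ker_def, ElemVert.elem]
    rw [G2.elem_eq_iff x.2 y.2, G2.elem_eq_iff (ψ x).2 (ψ y).2]
    exact or_congr φ.injective.eq_iff.symm φ.map_adj_iff.symm
  let e := (Setoid.quotientKerEquivRange ElemVert.elem).symm.trans
    ((Quotient.congr ψ hψ).trans (Setoid.quotientKerEquivRange ElemVert.elem))
  have he (x) : e ⟨x.elem, x, rfl⟩ = ⟨(ψ x).elem, ψ x, rfl⟩ := by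
    have hx : (Setoid.quotientKerEquivRange ElemVert.elem).symm ⟨x.elem, x, rfl⟩ = ⟦x⟧ :=
      Equiv.symm_apply_eq _ |>.2 rfl
    simp only [e, Equiv.trans_apply, hx]
    rfl
  obtain ⟨F, hF0, hF⟩ := exists_equiv_extend_of_card_eq hcard e
    (ElemVert.zero_notMem_range_elem h0) (ElemVert.zero_notMem_range_elem h0')
  refine ⟨F, hF0, fun x hx => ?_⟩
  have := hF ⟨ElemVert.elem ⟨x, hx⟩, _, rfl⟩
  rw [he] at this
  exact this.symm

lemma map_eq_of_elem_eq {F : A → B} (hφ : ∀ x, (φ x).1.color = x.1.color)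
    (hF : ∀ x, x.1.color ≠ 3 → (φ x).1.elem = F x.1.elem) (x : {x // IsVert mul x}) :
    (φ x).1 = x.1.map F := by
  have elem_vert (x : {x // IsVert mul x}) (hx : x.1.color ≠ 3) : (φ x).1 = x.1.map F :=
    Vert.eq_of_color_eq_of_elem_eq (by simp [hφ]) (by rwa [hφ]) (by simp [hF x hx])
  rcases x with ⟨x | x | x | ⟨u, v⟩, hx⟩
  iterate 3 exact elem_vert _ (by simp [Vert.color])
  have hu : u ∉ annL mul := fun h => hx (h v)
  have hv : v ∉ annR mul := fun h => hx (h u)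
  obtain ⟨p, q, hpq⟩ := Vert.color_eq_three_iff.1 (hφ ⟨.t u v, hx⟩)
  have hr : G2Adj mul' (φ ⟨.r u, hu⟩).1 (φ ⟨.t u v, hx⟩).1 := φ.map_adj_iff.2 (.g1 (.rt u v hx))
  have hc : G2Adj mul' (φ ⟨.c v, hv⟩).1 (φ ⟨.t u v, hx⟩).1 := φ.map_adj_iff.2 (.g1 (.ct u v hx))
  rw [elem_vert _ (by simp [Vert.color]), hpq] at hr hc
  rw [hpq, ← hr.eq_of_r_t, ← hc.eq_of_c_t]
  rfl

lemma mul_apply_of_map_eq {F : A → B} (hF_inj : Function.Injective F) (hF0 : F 0 = 0)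
    (hF : ∀ x, (φ x).1 = x.1.map F) (u v : A) : mul' (F u) (F v) = F (mul u v) := by
  by_cases huv : mul u v = 0
  · rw [huv, hF0]
    by_contra h
    obtain ⟨x, hx⟩ := φ.surjective ⟨.t (F u) (F v), h⟩
    have hxt : x.1 = .t u v := Vert.map_injective hF_inj ((hF x).symm.trans (congrArg Subtype.val hx))
    exact (show IsVert mul (.t u v) from hxt ▸ x.2) huv
  · have h : G2Adj mul' (φ ⟨.s (mul u v), ⟨u, v, rfl⟩, huv⟩).1 (φ ⟨.t u v, huv⟩).1 :=
      φ.map_adj_iff.2 (.g1 (.st u v huv))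
    rw [hF, hF] at h
    exact h.eq_of_s_t.symm

theorem exists_multiplicative_equiv_of_G2_iso [Finite A] (hcard : Nat.card A = Nat.card B)
    (h0 : (0 : A) ∈ annL mul ∩ annR mul) (h0' : (0 : B) ∈ annL mul' ∩ annR mul')
    (φ : G2 mul ≃g G2 mul') (hφ : ∀ x, (φ x).1.color = x.1.color) :
    ∃ F : A ≃ B, ∀ u v, mul' (F u) (F v) = F (mul u v) := by
  obtain ⟨F, hF0, hF⟩ := exists_equiv_elem_eq hcard h0 h0' hφ
  exact ⟨F, mul_apply_of_map_eq F.injective hF0 (map_eq_of_elem_eq hφ hF)⟩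

end Reconstruction

lemma zero_mem_annL_inter_annR {K M : Type*} [CommSemiring K] [AddCommMonoid M] [Module K M]
    (m : M →ₗ[K] M →ₗ[K] M) : (0 : M) ∈ annL (fun a b => m a b) ∩ annR (fun a b => m a b) :=
  ⟨fun v => by simp, fun v => by simp⟩

theorem stmt_17 {K A A' : Type*} [Field K] [Finite K]
    [AddCommGroup A] [Module K A] [AddCommGroup A'] [Module K A']
    [Module.Finite K A] [Module.Finite K A'] (n : ℕ)
    (hA : Module.finrank K A = n) (hA' : Module.finrank K A' = n)
    (mul : A →ₗ[K] A →ₗ[K] A) (mul' : A' →ₗ[K] A' →ₗ[K] A') :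
    ((∃ f : A ≃ₗ[K] A', ∀ u v : A, mul' (f u) (f v) = f (mul u v)) →
      ∃ φ : (G2 fun a b : A => mul a b) ≃g (G2 fun a b : A' => mul' a b),
        ∀ x, (φ x).1.color = x.1.color) ∧
    ((∃ φ : (G2 fun a b : A => mul a b) ≃g (G2 fun a b : A' => mul' a b),
        ∀ x, (φ x).1.color = x.1.color) →
      ∃ f : A → A', Function.Bijective f ∧
        ∀ u v : A, mul' (f u) (f v) = f (mul u v)) := by
  refine ⟨fun ⟨f, hf⟩ => ⟨G2.isoOfEquiv (g := f.toEquiv) hf f.map_zero,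
    G2.isoOfEquiv_color _ _⟩, fun ⟨φ, hφ⟩ => ?_⟩
  have : Finite A := Module.finite_of_finite K
  have hcard : Nat.card A = Nat.card A' :=
    Nat.card_congr (LinearEquiv.ofFinrankEq (R := K) A A' (hA.trans hA'.symm)).toEquiv
  obtain ⟨F, hF⟩ := exists_multiplicative_equiv_of_G2_iso hcard (zero_mem_annL_inter_annR mul)
    (zero_mem_annL_inter_annR mul') φ hφ
  exact ⟨F, F.bijective, hF⟩
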